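/- Let 𝔑₁ be the 3-dimensional algebra with basis e₁, e₂, e₃ and nonzero products e₁e₂ = e₃, e₂e₁ = −e₃ (a Zinbiel algebra). Then every automorphism of 𝔑₁ has matrix of the form [[x, y, 0], [z, w, 0], [t, p, xw − yz]] with xw − yz ≠ 0, and conversely every such matrix defines an automorphism. -/
import Mathlib


/-- Standard basis vectors of `Fin 3 → ℂ`. -/
noncomputable def e (i : Fin 3) : Fin 3 → ℂ := Pi.single i 1

/-- Multiplication of the Zinbiel algebra `𝔑₁`: `e₁e₂ = e₃`, `e₂e₁ = -e₃`. -/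
def mulN1 (a b : Fin 3 → ℂ) : Fin 3 → ℂ := fun k => if k = 2 then a 0 * b 1 - a 1 * b 0 else 0

lemma vdec (v : Fin 3 → ℂ) : v = v 0 • e 0 + v 1 • e 1 + v 2 • e 2 := by
  funext k
  fin_cases k <;> simp [e, Pi.single_apply]

lemma mul_eq (a b : Fin 3 → ℂ) : mulN1 a b = (a 0 * b 1 - a 1 * b 0) • e 2 := by
  funext k
  fin_cases k <;> simp [mulN1, e, Pi.single_apply]

theorem stmt_11 (φ : (Fin 3 → ℂ) ≃ₗ[ℂ] (Fin 3 → ℂ)) :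
    (∀ a b : Fin 3 → ℂ, φ (mulN1 a b) = mulN1 (φ a) (φ b)) ↔
    ∃ x y z w t p : ℂ, x * w - y * z ≠ 0 ∧
      φ (e 0) = x • e 0 + z • e 1 + t • e 2 ∧
      φ (e 1) = y • e 0 + w • e 1 + p • e 2 ∧
      φ (e 2) = (x * w - y * z) • e 2 := by
  constructor
  · intro h
    refine ⟨φ (e 0) 0, φ (e 1) 0, φ (e 0) 1, φ (e 1) 1, φ (e 0) 2, φ (e 1) 2, ?_, ?_, ?_, ?_⟩
    · intro hzero
      have h01 : mulN1 (e 0) (e 1) = e 2 := by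
        funext k; fin_cases k <;> simp [mulN1, e, Pi.single_apply]
      have h2 : φ (e 2) = (φ (e 0) 0 * φ (e 1) 1 - φ (e 0) 1 * φ (e 1) 0) • e 2 := by
        have hh := h (e 0) (e 1)
        rw [h01] at hh
        rw [hh, mul_eq]
      have hz2 : φ (e 0) 0 * φ (e 1) 1 - φ (e 0) 1 * φ (e 1) 0 = 0 := by
        linear_combination hzero
      rw [hz2, zero_smul] at h2
      have : (e 2 : Fin 3 → ℂ) = 0 := by
        have := φ.injective (h2.trans (map_zero φ).symm)
        exact this
      have h1 : (e 2 : Fin 3 → ℂ) 2 = 1 := by simp [e]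
      rw [this] at h1
      simp at h1
    · exact vdec (φ (e 0))
    · exact vdec (φ (e 1))
    · have h01 : mulN1 (e 0) (e 1) = e 2 := by
        funext k; fin_cases k <;> simp [mulN1, e, Pi.single_apply]
      have hh := h (e 0) (e 1)
      rw [h01] at hh
      rw [hh, mul_eq]
      congr 1
      ring
  · rintro ⟨x, y, z, w, t, p, hne, h0, h1, h2⟩ a b
    have hc : ∀ v : Fin 3 → ℂ, φ v 0 = x * v 0 + y * v 1 ∧ φ v 1 = z * v 0 + w * v 1 := by
      intro v
      have hφ : φ v = v 0 • φ (e 0) + v 1 • φ (e 1) + v 2 • φ (e 2) := by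
        conv_lhs => rw [vdec v]
        rw [map_add, map_add, map_smul, map_smul, map_smul]
      rw [hφ, h0, h1, h2]
      constructor <;> simp [e, Pi.single_apply] <;> ring
    obtain ⟨ha0, ha1⟩ := hc a
    obtain ⟨hb0, hb1⟩ := hc b
    rw [mul_eq a b, map_smul, h2, mul_eq, ha0, ha1, hb0, hb1, smul_smul]
    congr 1
    ring
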